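/- arXiv:2207.03747 — 3 statements merged into one kernel-verified Lean document; each statement's English description precedes it below -/
import Mathlib

section
/- Let G be a finite simple graph with minimum degree at least 6, let S be a subset of V(G), and let F be a connected component of G∖S having exactly 5 vertices. If |E_G(V(F), S)| ≤ 11, then F is isomorphic to the complete graph K₅; that is, every two distinct vertices of F are adjacent in G. -/
open SimpleGraph

/-- The set of edges of `G` with one endpoint in `A` and the other endpoint in `B`. -/
def crossEdges {V : Type*} (G : SimpleGraph V) (A B : Set V) : Set (Sym2 V) :=
  {e | e ∈ G.edgeSet ∧ ∃ a ∈ A, ∃ b ∈ B, e = s(a, b)}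

/-- If `G` is a finite simple graph with minimum degree at least 6, `S ⊆ V(G)`, and `F` is a
connected component of `G ∖ S` with exactly 5 vertices and `|E_G(V(F), S)| ≤ 11`, then `F` is
isomorphic to `K₅`, i.e. every two distinct vertices of `F` are adjacent in `G`. -/
theorem stmt_2 {V : Type*} [Fintype V] (G : SimpleGraph V) [DecidableRel G.Adj]
    (hδ : ∀ v : V, 6 ≤ G.degree v)
    (S : Set V)
    (F : (G.induce (Sᶜ : Set V)).ConnectedComponent)
    (hF : (Subtype.val '' F.supp).ncard = 5)
    (hE : (crossEdges G (Subtype.val '' F.supp) S).ncard ≤ 11) :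
    ∀ u ∈ F.supp, ∀ v ∈ F.supp, u ≠ v → G.Adj (u : V) (v : V) := by
  classical
  intro u hu v hv huv
  by_contra hadj
  set Aset : Set V := Subtype.val '' F.supp with hAsetdef
  have hAfin : Aset.Finite := Set.toFinite _
  have hSfin : S.Finite := Set.toFinite _
  set A : Finset V := hAfin.toFinset with hAdef
  set SF : Finset V := hSfin.toFinset with hSFdef
  have hmemA : ∀ x, x ∈ A ↔ x ∈ Aset := fun x => hAfin.mem_toFinset
  have hmemSF : ∀ x, x ∈ SF ↔ x ∈ S := fun x => hSfin.mem_toFinset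
  have hAcard : A.card = 5 := by
    rw [← Set.ncard_eq_toFinset_card Aset hAfin]; exact hF
  -- vertices of A are outside S
  have hAS : ∀ a ∈ Aset, a ∉ S := by
    rintro a ⟨a', _, rfl⟩
    exact a'.2
  -- neighbors of vertices of A lie in A ∪ S
  have hclosure : ∀ a ∈ Aset, ∀ x, G.Adj a x → x ∈ Aset ∨ x ∈ S := by
    rintro a ⟨a', ha', rfl⟩ x hax
    by_cases hxS : x ∈ S
    · exact Or.inr hxS
    · left
      refine ⟨⟨x, hxS⟩, ?_, rfl⟩
      rw [SimpleGraph.ConnectedComponent.mem_supp_iff] at ha' ⊢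
      rw [← ha']
      have hadj' : (G.induce (Sᶜ : Set V)).Adj ⟨x, hxS⟩ a' := by
        simp only [SimpleGraph.induce_eq_coe_induce_top, SimpleGraph.Subgraph.coe_adj,
          SimpleGraph.Subgraph.induce_adj, SimpleGraph.Subgraph.top_adj]
        exact ⟨hxS, a'.2, hax.symm⟩
      exact SimpleGraph.ConnectedComponent.sound hadj'.reachable
  have huA : (u : V) ∈ A := (hmemA _).mpr ⟨u, hu, rfl⟩
  have hvA : (v : V) ∈ A := (hmemA _).mpr ⟨v, hv, rfl⟩
  have huvV : (u : V) ≠ (v : V) := fun h => huv (Subtype.ext h)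
  -- the count of S-neighbors
  set f : V → ℕ := fun a => (G.neighborFinset a ∩ SF).card with hfdef
  have hkey : ∀ a ∈ A, 6 ≤ (G.neighborFinset a ∩ A).card + f a := by
    intro a ha
    have hsub : G.neighborFinset a ⊆ (G.neighborFinset a ∩ A) ∪ (G.neighborFinset a ∩ SF) := by
      intro x hx
      have hx' : G.Adj a x := by rwa [SimpleGraph.mem_neighborFinset] at hx
      rcases hclosure a ((hmemA a).mp ha) x hx' with h | h
      · exact Finset.mem_union_left _ (Finset.mem_inter.mpr ⟨hx, (hmemA x).mpr h⟩)
      · exact Finset.mem_union_right _ (Finset.mem_inter.mpr ⟨hx, (hmemSF x).mpr h⟩)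
    calc 6 ≤ G.degree a := hδ a
      _ = (G.neighborFinset a).card := rfl
      _ ≤ ((G.neighborFinset a ∩ A) ∪ (G.neighborFinset a ∩ SF)).card :=
          Finset.card_le_card hsub
      _ ≤ _ := Finset.card_union_le _ _
  have hgen : ∀ a ∈ A, 2 ≤ f a := by
    intro a ha
    have h1 : G.neighborFinset a ∩ A ⊆ A.erase a := by
      intro x hx
      rcases Finset.mem_inter.mp hx with ⟨hx1, hx2⟩
      refine Finset.mem_erase.mpr ⟨?_, hx2⟩
      rintro rfl
      exact G.irrefl ((SimpleGraph.mem_neighborFinset _ _ _).mp hx1)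
    have h2 : (G.neighborFinset a ∩ A).card ≤ 4 := by
      have h3 := Finset.card_le_card h1
      rw [Finset.card_erase_of_mem ha, hAcard] at h3
      omega
    have := hkey a ha
    omega
  have hspecial : ∀ a w : V, a ∈ A → w ∈ A → a ≠ w → ¬ G.Adj a w → 3 ≤ f a := by
    intro a w ha hw haw hnadj
    have h1 : G.neighborFinset a ∩ A ⊆ (A.erase a).erase w := by
      intro x hx
      rcases Finset.mem_inter.mp hx with ⟨hx1, hx2⟩
      have hadjx : G.Adj a x := (SimpleGraph.mem_neighborFinset _ _ _).mp hx1
      refine Finset.mem_erase.mpr ⟨?_, Finset.mem_erase.mpr ⟨?_, hx2⟩⟩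
      · rintro rfl; exact hnadj hadjx
      · rintro rfl; exact G.irrefl hadjx
    have h2 : (G.neighborFinset a ∩ A).card ≤ 3 := by
      have hw' : w ∈ A.erase a := Finset.mem_erase.mpr ⟨haw.symm, hw⟩
      have h3 := Finset.card_le_card h1
      rw [Finset.card_erase_of_mem hw', Finset.card_erase_of_mem ha, hAcard] at h3
      omega
    have := hkey a ha
    omega
  have hfu : 3 ≤ f u := hspecial u v huA hvA huvV hadj
  have hfv : 3 ≤ f v := hspecial v u hvA huA huvV.symm (fun h => hadj h.symm)
  -- sum lower bound
  have hpair : ({(u : V), (v : V)} : Finset V) ⊆ A := by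
    intro x hx
    rcases Finset.mem_insert.mp hx with rfl | hx
    · exact huA
    · rw [Finset.mem_singleton] at hx; subst hx; exact hvA
  have hsum : 12 ≤ ∑ a ∈ A, f a := by
    rw [← Finset.sum_sdiff hpair]
    have h1 : ∑ a ∈ ({(u : V), (v : V)} : Finset V), f a = f u + f v :=
      Finset.sum_pair huvV
    have h2 : 6 ≤ ∑ a ∈ A \ {(u : V), (v : V)}, f a := by
      have hcard : (A \ {(u : V), (v : V)}).card = 3 := by
        rw [Finset.card_sdiff_of_subset hpair, Finset.card_pair huvV, hAcard]
      calc 6 = 3 * 2 := rfl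
        _ = (A \ {(u : V), (v : V)}).card * 2 := by rw [hcard]
        _ ≤ _ := Finset.card_nsmul_le_sum _ _ _ (fun a ha => hgen a (Finset.mem_sdiff.mp ha).1)
    omega
  -- build a finset of cross edges
  set T : Finset (Sym2 V) :=
    A.biUnion (fun a => (G.neighborFinset a ∩ SF).image (fun b => s(a, b))) with hTdef
  have hTcard : T.card = ∑ a ∈ A, f a := by
    rw [hTdef, Finset.card_biUnion]
    · refine Finset.sum_congr rfl (fun a _ => ?_)
      rw [Finset.card_image_of_injective _ (fun b c h => Sym2.congr_right.mp h)]
    · intro a ha b hb hab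
      simp only [Finset.disjoint_left]
      intro e hea heb
      rcases Finset.mem_image.mp hea with ⟨x, hx, rfl⟩
      rcases Finset.mem_image.mp heb with ⟨y, hy, hxy⟩
      rcases Sym2.eq_iff.mp hxy.symm with ⟨h1, h2⟩ | ⟨h1, h2⟩
      · exact hab h1
      · subst h1
        exact hAS a ((hmemA a).mp ha) ((hmemSF a).mp (Finset.mem_inter.mp hy).2)
  have hTsub : (T : Set (Sym2 V)) ⊆ crossEdges G Aset S := by
    intro e he
    rw [Finset.mem_coe, hTdef, Finset.mem_biUnion] at he
    rcases he with ⟨a, ha, he⟩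
    rcases Finset.mem_image.mp he with ⟨b, hb, rfl⟩
    rcases Finset.mem_inter.mp hb with ⟨hb1, hb2⟩
    have hadjab : G.Adj a b := (SimpleGraph.mem_neighborFinset _ _ _).mp hb1
    exact ⟨(SimpleGraph.mem_edgeSet G).mpr hadjab, a, (hmemA a).mp ha, b, (hmemSF b).mp hb2, rfl⟩
  have hfinal : 12 ≤ (crossEdges G Aset S).ncard := by
    calc 12 ≤ ∑ a ∈ A, f a := hsum
      _ = T.card := hTcard.symm
      _ = (T : Set (Sym2 V)).ncard := (Set.ncard_coe_finset T).symm
      _ ≤ (crossEdges G Aset S).ncard := Set.ncard_le_ncard hTsub (Set.toFinite _)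
  omega
end

section
/- Let G be a finite simple graph on n ≥ 36 vertices with minimum degree at least 6 that contains no subgraph isomorphic to the complete graph K₇. Then the number of odd components of G satisfies 7·odd(G) ≤ n − 8. -/
/-!
Minimum degree `k` forces every component to have at least `k + 1` vertices, and a component
with exactly `k + 1` vertices is a clique `K_{k+1}`. So for `k = 6` without `K₇` every component
has at least 8 vertices, and every odd one at least 9; hence `9 · odd(G) ≤ n`, which together
with `n ≥ 36` gives `7 · odd(G) ≤ n - 8`.
-/

namespace SimpleGraph

variable {V : Type*} {G : SimpleGraph V}

lemma ConnectedComponent.neighborSet_subset_supp (c : G.ConnectedComponent) {v : V}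
    (hv : v ∈ c.supp) : G.neighborSet v ⊆ c.supp :=
  fun _ hw => c.mem_supp_of_adj_mem_supp hv hw

lemma degree_eq_ncard_neighborSet (v : V) [Fintype (G.neighborSet v)] :
    G.degree v = (G.neighborSet v).ncard := by
  rw [← card_neighborSet_eq_degree, ← Nat.card_eq_fintype_card, Nat.card_coe_set_eq]

section Fintype

variable [Fintype V] [DecidableRel G.Adj]

lemma ConnectedComponent.degree_lt_ncard_supp (c : G.ConnectedComponent) {v : V}
    (hv : v ∈ c.supp) : G.degree v < c.supp.ncard := by
  rw [degree_eq_ncard_neighborSet]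
  exact Set.ncard_lt_ncard <| (Set.ssubset_iff_of_subset (c.neighborSet_subset_supp hv)).2
    ⟨v, hv, G.notMem_neighborSet_self⟩

lemma ConnectedComponent.isClique_supp_of_ncard_supp_le (c : G.ConnectedComponent)
    (h : ∀ v ∈ c.supp, c.supp.ncard ≤ G.degree v + 1) : G.IsClique c.supp := by
  intro v hv w hw hvw
  have hsub : G.neighborSet v ⊆ c.supp \ {v} :=
    Set.subset_sdiff_singleton (c.neighborSet_subset_supp hv) G.notMem_neighborSet_self
  have heq : G.neighborSet v = c.supp \ {v} := by
    refine Set.eq_of_subset_of_ncard_le hsub ?_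
    rw [Set.ncard_sdiff_singleton_of_mem hv, ← degree_eq_ncard_neighborSet]
    have := h v hv
    omega
  exact heq.symm.subset ⟨hw, hvw.symm⟩

lemma CliqueFree.add_two_le_ncard_supp {k : ℕ} (hK : G.CliqueFree (k + 1))
    (hδ : ∀ v, k ≤ G.degree v) (c : G.ConnectedComponent) : k + 2 ≤ c.supp.ncard := by
  obtain ⟨v, hv⟩ := c.nonempty_supp
  have hlt := (hδ v).trans_lt (c.degree_lt_ncard_supp hv)
  by_contra! hle
  classical
  apply hK c.supp.toFinset
  refine ⟨by simpa using c.isClique_supp_of_ncard_supp_le fun w _ => by have := hδ w; omega, ?_⟩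
  rw [← Set.ncard_eq_toFinset_card']
  omega

end Fintype

lemma mul_ncard_le_card_of_le_ncard_supp [Fintype V] {S : Set G.ConnectedComponent} {m : ℕ}
    (h : ∀ c ∈ S, m ≤ c.supp.ncard) : m * S.ncard ≤ Fintype.card V := by
  classical
  calc m * S.ncard = S.toFinset.card • m := by
        rw [Set.ncard_eq_toFinset_card', smul_eq_mul, mul_comm]
    _ ≤ ∑ c ∈ S.toFinset, c.supp.toFinset.card :=
        Finset.card_nsmul_le_sum _ _ _ fun c hc => by
          simpa [Set.ncard_eq_toFinset_card'] using h c (Set.mem_toFinset.1 hc)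
    _ = (S.toFinset.biUnion fun c => c.supp.toFinset).card :=
        (Finset.card_biUnion fun _ _ _ _ hcd => Set.disjoint_toFinset.2
          (G.pairwise_disjoint_supp_connectedComponent hcd)).symm
    _ ≤ Fintype.card V := Finset.card_le_univ _

end SimpleGraph

/-- If `G` is a finite simple graph on `n ≥ 36` vertices with minimum degree at least 6
containing no subgraph isomorphic to `K₇`, then `7 · odd(G) ≤ n - 8`. -/
theorem stmt_7 {V : Type*} [Fintype V] (G : SimpleGraph V) [DecidableRel G.Adj]
    (hn : 36 ≤ Fintype.card V)
    (hδ : ∀ v : V, 6 ≤ G.degree v) (hK7 : G.CliqueFree 7) :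
    7 * {c : G.ConnectedComponent | Odd c.supp.ncard}.ncard ≤ Fintype.card V - 8 := by
  have hodd : ∀ c ∈ G.oddComponents, 9 ≤ c.supp.ncard := fun c ⟨j, hj⟩ => by
    have := hK7.add_two_le_ncard_supp hδ c
    omega
  have := SimpleGraph.mul_ncard_le_card_of_le_ncard_supp hodd
  show 7 * G.oddComponents.ncard ≤ _
  omega
end

section
/- Let G be a finite simple graph with minimum degree at least 6, let S be a subset of V(G), let x₁, x₂ be two vertices of S, and let F be a connected component of G∖S isomorphic to the complete graph K₅ with vertex set {v₀, v₁, v₂, v₃, v₄}. If every neighbor in S of each of v₁, v₂, v₃, v₄ lies in {x₁, x₂}, then G contains a subgraph isomorphic to K₇ minus a triangle (the complete graph on 7 vertices with the three edges of one triangle deleted). -/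
/-!
Each of `v₁, …, v₄` has degree at least 6, yet its neighbours lie in `{x₁, x₂}` together with the
four other vertices of the component `F`. So its neighbourhood is exactly this six-element set:
`x₁ ≠ x₂`, both lie outside `F`, and each `vᵢ` (`i ≥ 1`) is adjacent to every other vertex of
`{x₁, x₂, v₀, …, v₄}`. This is `K₇` minus the triangle `x₁ x₂ v₀`.
-/

open SimpleGraph

/-- The complete graph `K₇` with the three edges of one triangle (on the first three
vertices) deleted. -/
def K7minusTriangle : SimpleGraph (Fin 7) :=
  SimpleGraph.fromRel (fun i j => ¬(i.val < 3 ∧ j.val < 3))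

namespace SimpleGraph

variable {V : Type*} {G : SimpleGraph V}

lemma ConnectedComponent.mem_image_val_supp_of_adj {s : Set V}
    (F : (G.induce s).ConnectedComponent) {u w : V} (hu : u ∈ Subtype.val '' F.supp)
    (hw : w ∈ s) (hadj : G.Adj u w) : w ∈ Subtype.val '' F.supp := by
  obtain ⟨u', hu', rfl⟩ := hu
  exact ⟨⟨w, hw⟩, F.mem_supp_of_adj_mem_supp hu' (by simpa using hadj), rfl⟩

lemma neighborSet_subset_inter_union_supp {S : Set V} (F : (G.induce Sᶜ).ConnectedComponent)
    {u : V} (hu : u ∈ Subtype.val '' F.supp) :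
    G.neighborSet u ⊆ (G.neighborSet u ∩ S) ∪ (Subtype.val '' F.supp \ {u}) := by
  intro w hw
  by_cases hwS : w ∈ S
  · exact Or.inl ⟨hw, hwS⟩
  · exact Or.inr ⟨F.mem_image_val_supp_of_adj hu hwS hw, (G.ne_of_adj hw).symm⟩

lemma neighborSet_eq_insert_insert_of_subset {u a b : V} {s : Set V} [Fintype (G.neighborSet u)]
    (hs : s.Finite) (h : G.neighborSet u ⊆ insert a (insert b s))
    (hdeg : s.ncard + 2 ≤ G.degree u) :
    G.neighborSet u = insert a (insert b s) ∧ a ∉ insert b s ∧ b ∉ s := by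
  have hN : (G.neighborSet u).ncard = G.degree u := by
    rw [← coe_neighborFinset, Set.ncard_coe_finset, card_neighborFinset_eq_degree]
  have hfin := (hs.insert b).insert a
  have hle : G.degree u ≤ (insert a (insert b s)).ncard := hN ▸ Set.ncard_le_ncard h hfin
  have hb := Set.ncard_insert_le b s
  have hab := Set.ncard_insert_le a (insert b s)
  refine ⟨Set.eq_of_subset_of_ncard_le h (by omega) hfin, fun ha => ?_, fun hbs => ?_⟩
  · rw [Set.ncard_insert_of_mem ha] at hle
    omega
  · rw [Set.ncard_insert_of_mem hbs] at hab
    omega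

lemma neighborSet_eq_insert_insert_of_mem_supp {S : Set V}
    (F : (G.induce Sᶜ).ConnectedComponent) (hF : (Subtype.val '' F.supp).Finite) {u a b : V}
    [Fintype (G.neighborSet u)] (hu : u ∈ Subtype.val '' F.supp)
    (hS : G.neighborSet u ∩ S ⊆ {a, b}) (hdeg : (Subtype.val '' F.supp).ncard + 1 ≤ G.degree u) :
    G.neighborSet u = insert a (insert b (Subtype.val '' F.supp \ {u})) ∧
      a ∉ insert b (Subtype.val '' F.supp) ∧ b ∉ Subtype.val '' F.supp := by
  set T := Subtype.val '' F.supp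
  have hsub : G.neighborSet u ⊆ insert a (insert b (T \ {u})) := by
    intro w hw
    rcases G.neighborSet_subset_inter_union_supp F hu hw with hwS | hwT
    · rcases hS hwS with rfl | rfl <;> simp
    · exact Or.inr (Or.inr hwT)
  have hT : 0 < T.ncard := (Set.ncard_pos hF).2 ⟨u, hu⟩
  obtain ⟨heq, ha, hb⟩ := G.neighborSet_eq_insert_insert_of_subset hF.sdiff hsub
    (by rw [Set.ncard_sdiff_singleton_of_mem hu]; omega)
  have hau : a ≠ u := (G.ne_of_adj (heq ▸ by simp : a ∈ G.neighborSet u)).symm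
  have hbu : b ≠ u := (G.ne_of_adj (heq ▸ by simp : b ∈ G.neighborSet u)).symm
  refine ⟨heq, ?_, ?_⟩ <;>
    simp only [Set.mem_insert_iff, Set.mem_sdiff, Set.mem_singleton_iff] at ha hb ⊢ <;> tauto

end SimpleGraph

lemma K7minusTriangle.map_adj_of_three_le {V : Type*} {G : SimpleGraph V} {f : Fin 7 → V}
    (hf : ∀ i : Fin 7, 3 ≤ i.val → ∀ j, i ≠ j → G.Adj (f i) (f j)) :
    ∀ i j, K7minusTriangle.Adj i j → G.Adj (f i) (f j) := by
  intro i j hij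
  simp only [K7minusTriangle, SimpleGraph.fromRel_adj, not_and_or, not_lt] at hij
  obtain ⟨hne, h⟩ := hij
  by_cases hi : 3 ≤ i.val
  · exact hf i hi j hne
  · exact (hf j (by omega) i hne.symm).symm

lemma Function.injective_of_ncard_range_eq {ι α : Type*} [Finite ι] {f : ι → α}
    (h : (Set.range f).ncard = Nat.card ι) : Function.Injective f := by
  rw [← Set.injOn_univ]
  exact Set.injOn_of_ncard_image_eq (by rwa [Set.image_univ, Set.ncard_univ])

theorem stmt_13_general {V : Type*} [Fintype V] (G : SimpleGraph V) [DecidableRel G.Adj]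
    (hδ : ∀ v : V, 6 ≤ G.degree v)
    (S : Set V) (x₁ x₂ : V)
    (F : (G.induce (Sᶜ : Set V)).ConnectedComponent)
    (v₀ v₁ v₂ v₃ v₄ : V)
    (hsupp : Subtype.val '' F.supp = {v₀, v₁, v₂, v₃, v₄})
    (hcard : ({v₀, v₁, v₂, v₃, v₄} : Set V).ncard = 5)
    (hnbr : ∀ u ∈ ({v₁, v₂, v₃, v₄} : Set V), G.neighborSet u ∩ S ⊆ {x₁, x₂}) :
    ∃ f : Fin 7 → V, Function.Injective f ∧
      ∀ i j, K7minusTriangle.Adj i j → G.Adj (f i) (f j) := by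
  set C : Set V := {v₀, v₁, v₂, v₃, v₄}
  have hnbhd : ∀ u ∈ ({v₁, v₂, v₃, v₄} : Set V),
      G.neighborSet u = insert x₁ (insert x₂ (C \ {u})) ∧ x₁ ∉ insert x₂ C ∧ x₂ ∉ C := by
    intro u hu
    have huC : u ∈ Subtype.val '' F.supp := hsupp ▸ Set.mem_insert_of_mem v₀ hu
    rw [← hsupp]
    exact G.neighborSet_eq_insert_insert_of_mem_supp F (Set.toFinite _) huC (hnbr u hu)
      (by rw [hsupp, hcard]; exact hδ u)
  have hx := (hnbhd v₁ (by simp)).2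
  set f : Fin 7 → V := ![x₁, x₂, v₀, v₁, v₂, v₃, v₄]
  have hrange : Set.range f = insert x₁ (insert x₂ C) := by
    simp only [f, C, Matrix.range_cons, Matrix.range_empty, Set.union_empty, Set.singleton_union]
  have hf : Function.Injective f := Function.injective_of_ncard_range_eq <| by
    rw [hrange, Set.ncard_insert_of_notMem hx.1, Set.ncard_insert_of_notMem hx.2, hcard]
    simp
  refine ⟨f, hf, K7minusTriangle.map_adj_of_three_le fun i hi j hij => ?_⟩
  have hfi : f i ∈ ({v₁, v₂, v₃, v₄} : Set V) := by
    fin_cases i <;> simp [f] at hi ⊢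
  have hfj : f j ∈ insert x₁ (insert x₂ C) := hrange ▸ Set.mem_range_self j
  have hne := hf.ne hij
  show f j ∈ G.neighborSet (f i)
  rw [(hnbhd _ hfi).1]
  simp only [Set.mem_insert_iff, Set.mem_sdiff, Set.mem_singleton_iff] at hfj ⊢
  tauto

/-- Let `G` be a finite simple graph with minimum degree at least 6, `S ⊆ V(G)`,
`x₁, x₂ ∈ S`, and let `F` be a connected component of `G ∖ S` isomorphic to `K₅` with vertex
set `{v₀, v₁, v₂, v₃, v₄}`. If every neighbor in `S` of each of `v₁, v₂, v₃, v₄` lies in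
`{x₁, x₂}`, then `G` contains a subgraph isomorphic to `K₇` minus a triangle. -/
theorem stmt_13 {V : Type*} [Fintype V] (G : SimpleGraph V) [DecidableRel G.Adj]
    (hδ : ∀ v : V, 6 ≤ G.degree v)
    (S : Set V) (x₁ x₂ : V) (hx₁ : x₁ ∈ S) (hx₂ : x₂ ∈ S)
    (F : (G.induce (Sᶜ : Set V)).ConnectedComponent)
    (v₀ v₁ v₂ v₃ v₄ : V)
    (hsupp : Subtype.val '' F.supp = {v₀, v₁, v₂, v₃, v₄})
    (hcard : ({v₀, v₁, v₂, v₃, v₄} : Set V).ncard = 5)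
    (hK5 : ∀ u ∈ ({v₀, v₁, v₂, v₃, v₄} : Set V), ∀ w ∈ ({v₀, v₁, v₂, v₃, v₄} : Set V),
      u ≠ w → G.Adj u w)
    (hnbr : ∀ u ∈ ({v₁, v₂, v₃, v₄} : Set V), G.neighborSet u ∩ S ⊆ {x₁, x₂}) :
    ∃ f : Fin 7 → V, Function.Injective f ∧
      ∀ i j, K7minusTriangle.Adj i j → G.Adj (f i) (f j) :=
  stmt_13_general G hδ S x₁ x₂ F v₀ v₁ v₂ v₃ v₄ hsupp hcard hnbr
end
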